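/- If a decreasing sequence $(A_i)_{i<\kappa}$ of unbounded subsets of $\kappa$ and a $\kappa$-independent family $\mathcal{A} = \bigcup_{i<\kappa} \mathcal{A}_i$ (an increasing union of $\kappa$-independent families of size $\le \kappa$) satisfy that $\mathcal{A}_i^h \cap A_i$ is unbounded for every $i < \kappa$ and every $h \in \mathrm{FF}_{<\omega,\kappa}(\mathcal{A}_i)$, then there exists a set $A'' \subseteq \kappa$ which is a pseudo-intersection of $(A_i)_{i<\kappa}$ (i.e., $A'' \setminus A_i$ is bounded for each $i$) and meets $\mathcal{A}^h$ in an unbounded set for every $h \in \mathrm{FF}_{<\omega,\kappa}(\mathcal{A})$. -/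

import Mathlib

open Set Cardinal

/-- Finite partial functions from a family of sets to `{0,1}` (as `Option Bool`):
`h s = some true` means `s` is taken positively, `some false` negatively. -/
def FF {α : Type*} (𝒜 : Set (Set α)) : Set (Set α → Option Bool) :=
  {h | (∀ s, h s ≠ none → s ∈ 𝒜) ∧ {s | h s ≠ none}.Finite}

/-- The Boolean combination determined by a partial function `h`. -/
def bc {α : Type*} (h : Set α → Option Bool) : Set α :=
  {x | ∀ s : Set α, (h s = some true → x ∈ s) ∧ (h s = some false → x ∉ s)}

/-- `h'` extends `h` as a partial function. -/
def extFF {α : Type*} (h h' : Set α → Option Bool) : Prop :=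
  ∀ s b, h s = some b → h' s = some b

/-- A family is κ-independent if every finite Boolean combination is unbounded. -/
def kIndepF {α : Type*} [Preorder α] (𝒜 : Set (Set α)) : Prop :=
  ∀ h ∈ FF 𝒜, ¬ BddAbove (bc h)

/-!
There are at most `κ` finite partial functions on `⋃ i, 𝒜seq i`; enumerate them as `(h_j)_{j<κ}`.
Each `h_j` lives on a single `𝒜seq m`, so `bc h_j ∩ Aseq i` is unbounded for all `i ≥ m`. At stage
`i`, pick for every `j ≤ i` that is already available a point of `bc h_j ∩ Aseq i` above `i`, and let
`A''` collect the picks. Since `Aseq` decreases, a pick outside `Aseq t` was made at a stage `i < t`;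
there are fewer than `κ` such picks, so by regularity `A'' \ Aseq t` is bounded. Picks at later and
later stages make every `bc h_j ∩ A''` unbounded.
-/

lemma FF_mono {α : Type*} {𝒜 ℬ : Set (Set α)} (h𝒜ℬ : 𝒜 ⊆ ℬ) : FF 𝒜 ⊆ FF ℬ :=
  fun _ hh => ⟨fun s hs => h𝒜ℬ (hh.1 s hs), hh.2⟩

lemma exists_mem_FF_of_mem_FF_iUnion {α ι : Type*} [Preorder ι] [IsDirectedOrder ι] [Nonempty ι]
    {𝒜 : ι → Set (Set α)} (h𝒜 : Monotone 𝒜) {h : Set α → Option Bool}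
    (hh : h ∈ FF (⋃ i, 𝒜 i)) : ∃ i, h ∈ FF (𝒜 i) := by
  obtain ⟨i, hi⟩ := h𝒜.directed_le.exists_mem_subset_of_finset_subset_biUnion
    (s := hh.2.toFinset) fun s hs => hh.1 s (by simpa using hs)
  exact ⟨i, fun s hs => hi (by simpa using hs), hh.2⟩

lemma mk_FF_le {α : Type*} {𝒜 : Set (Set α)} {κ : Cardinal} (hκ : ℵ₀ ≤ κ) (h𝒜 : #𝒜 ≤ κ) :
    #(FF 𝒜) ≤ κ := by
  have hfin : ∀ h : FF 𝒜, {p : 𝒜 × Bool | h.1 p.1 = some p.2}.Finite := fun h =>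
    ((h.2.2.preimage Subtype.val_injective.injOn).prod finite_univ).subset
      fun p hp => ⟨by simp_all, trivial⟩
  have graph_inj : Function.Injective fun h : FF 𝒜 => (hfin h).toFinset := by
    intro h h' hgraph
    ext1; funext s
    by_cases hs : s ∈ 𝒜
    · refine Option.ext fun b => ?_
      simpa using congrArg ((⟨s, hs⟩, b) ∈ ·) hgraph
    · have hnone : ∀ g ∈ FF 𝒜, g s = none := fun g hg => by_contra fun hne => hs (hg.1 s hne)
      rw [hnone _ h.2, hnone _ h'.2]
  calc #(FF 𝒜) ≤ #(Finset (𝒜 × Bool)) := mk_le_of_injective graph_inj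
    _ ≤ #(List (𝒜 × Bool)) := mk_le_of_surjective List.toFinset_surjective
    _ ≤ max ℵ₀ #(𝒜 × Bool) := mk_list_le_max _
    _ ≤ κ := by
      refine max_le hκ ?_
      calc #(𝒜 × Bool) = #𝒜 * 2 := by simp
        _ ≤ κ * κ := mul_le_mul' h𝒜 ((natCast_lt_aleph0 (n := 2)).le.trans hκ)
        _ = κ := mul_eq_self hκ

lemma bddAbove_of_mk_lt_cof {α : Type*} [LinearOrder α] {S : Set α} (hS : #S < Order.cof α) :
    BddAbove S :=
  by_contra fun hS' => hS.not_ge (Order.cof_le (IsCofinal.of_not_bddAbove hS'))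

theorem exists_pseudoIntersection_forall_not_bddAbove_inter {κ : Cardinal} (hreg : κ.IsRegular)
    {A B : κ.ord.ToType → Set κ.ord.ToType} (hA : Antitone A)
    (hB : ∀ j, ∃ m, ∀ i, m ≤ i → ¬ BddAbove (B j ∩ A i)) :
    ∃ A'' : Set κ.ord.ToType, (∀ i, BddAbove (A'' \ A i)) ∧ ∀ j, ¬ BddAbove (B j ∩ A'') := by
  choose m hm using hB
  have hpick : ∀ i j, ∃ y, max j (m j) ≤ i → y ∈ B j ∩ A i ∧ i < y := fun i j =>
    if hij : max j (m j) ≤ i then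
      (not_bddAbove_iff.1 (hm j i (le_of_max_le_right hij)) i).imp fun _ hy _ => hy
    else ⟨i, fun hij' => (hij hij').elim⟩
  choose k hk using hpick
  refine ⟨{x | ∃ i j, max j (m j) ≤ i ∧ k i j = x}, fun t => ?_, fun j => ?_⟩
  · apply bddAbove_of_mk_lt_cof
    rw [Ordinal.cof_toType, hreg.cof_ord]
    have hsub : {x | ∃ i j, max j (m j) ≤ i ∧ k i j = x} \ A t ⊆
        range fun p : Iio t × Iio t => k p.1 p.2 := by
      rintro _ ⟨⟨i, j, hij, rfl⟩, hnot⟩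
      have hit : i < t := lt_of_not_ge fun hti => hnot (hA hti (hk i j hij).1.2)
      exact ⟨(⟨i, hit⟩, ⟨j, (le_of_max_le_left hij).trans_lt hit⟩), rfl⟩
    calc _ ≤ #(Iio t × Iio t) := (mk_le_mk_of_subset hsub).trans mk_range_le
      _ < κ := by
        have hIio : #(Iio t) < κ := by simpa using mk_Iio_lt t (by simp)
        rw [mk_prod, lift_id]
        exact mul_lt_of_lt hreg.aleph0_le hIio hIio
  · refine not_bddAbove_iff.2 fun x => ?_
    have hij : max j (m j) ≤ max x (max j (m j)) := le_max_right _ _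
    obtain ⟨⟨hB, -⟩, hlt⟩ := hk _ j hij
    exact ⟨_, ⟨hB, _, j, hij, rfl⟩, (le_max_left _ _).trans_lt hlt⟩

theorem stmt_16_general (κ : Cardinal) (hreg : κ.IsRegular)
    (𝒜seq : κ.ord.ToType → Set (Set κ.ord.ToType))
    (Aseq : κ.ord.ToType → Set κ.ord.ToType)
    (hAdec : ∀ i j, i ≤ j → Aseq j ⊆ Aseq i)
    (h𝒜mono : ∀ i j, i ≤ j → 𝒜seq i ⊆ 𝒜seq j)
    (h𝒜card : ∀ i, #(𝒜seq i) ≤ κ)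
    (hmain : ∀ i, ∀ h ∈ FF (𝒜seq i), ¬ BddAbove (bc h ∩ Aseq i)) :
    ∃ A'' : Set κ.ord.ToType, (∀ i, BddAbove (A'' \ Aseq i)) ∧
      ∀ h ∈ FF (⋃ i, 𝒜seq i), ¬ BddAbove (bc h ∩ A'') := by
  have hUcard : #(⋃ i, 𝒜seq i) ≤ κ :=
    calc #(⋃ i, 𝒜seq i) ≤ #κ.ord.ToType * ⨆ i, #(𝒜seq i) := mk_iUnion_le _
      _ ≤ κ * κ := mul_le_mul' (mk_ord_toType κ).le (ciSup_le' h𝒜card)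
      _ = κ := mul_eq_self hreg.aleph0_le
  obtain ⟨enum⟩ : Nonempty (FF (⋃ i, 𝒜seq i) ↪ κ.ord.ToType) := by
    rw [← le_def, mk_ord_toType]
    exact mk_FF_le hreg.aleph0_le hUcard
  have : Nonempty (FF (⋃ i, 𝒜seq i)) := ⟨⟨fun _ => none, fun _ hs => (hs rfl).elim, by simp⟩⟩
  obtain ⟨A'', hpseudo, hmeet⟩ := exists_pseudoIntersection_forall_not_bddAbove_inter hreg hAdec
    (B := fun j => bc (Function.invFun enum j).1) fun j => by
      have : Nonempty κ.ord.ToType := ⟨j⟩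
      obtain ⟨m, hm⟩ := exists_mem_FF_of_mem_FF_iUnion h𝒜mono (Function.invFun enum j).2
      exact ⟨m, fun i hmi => hmain i _ (FF_mono (h𝒜mono m i hmi) hm)⟩
  refine ⟨A'', hpseudo, fun h hh => ?_⟩
  obtain ⟨j, hj⟩ := Function.invFun_surjective enum.injective ⟨h, hh⟩
  simpa [hj] using hmeet j

/-- Construction of a pseudo-intersection meeting every finite Boolean combination of an
increasing union of κ-independent families unboundedly. -/
theorem stmt_16 (κ : Cardinal) (hreg : κ.IsRegular) (hunc : ℵ₀ < κ)
    (𝒜seq : κ.ord.ToType → Set (Set κ.ord.ToType))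
    (Aseq : κ.ord.ToType → Set κ.ord.ToType)
    (hAunb : ∀ i, ¬ BddAbove (Aseq i))
    (hAdec : ∀ i j, i ≤ j → Aseq j ⊆ Aseq i)
    (h𝒜mono : ∀ i j, i ≤ j → 𝒜seq i ⊆ 𝒜seq j)
    (h𝒜ind : ∀ i, kIndepF (𝒜seq i))
    (h𝒜card : ∀ i, #(𝒜seq i) ≤ κ)
    (hUind : kIndepF (⋃ i, 𝒜seq i))
    (hmain : ∀ i, ∀ h ∈ FF (𝒜seq i), ¬ BddAbove (bc h ∩ Aseq i)) :
    ∃ A'' : Set κ.ord.ToType, (∀ i, BddAbove (A'' \ Aseq i)) ∧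
      ∀ h ∈ FF (⋃ i, 𝒜seq i), ¬ BddAbove (bc h ∩ A'') :=
  stmt_16_general κ hreg 𝒜seq Aseq hAdec h𝒜mono h𝒜card hmain
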